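/- arXiv:2604.18325 — 2 statements merged into one kernel-verified Lean document; each statement's English description precedes it below -/
import Mathlib

section
/- Let {a_k} be a nonnegative real sequence and ξ > 0. Then for every k ≥ 1, ∑_{j=1}^{k} a_j / (ξ + ∑_{i=1}^{j} a_i) ≤ log(1 + (1/ξ) ∑_{j=1}^{k} a_j). -/
open Finset Real

lemma sub_div_le_log_sub_log {x y : ℝ} (hx : 0 < x) (hy : 0 < y) :
    (y - x) / y ≤ log y - log x := by
  have h := one_sub_inv_le_log_of_pos (div_pos hy hx)
  rwa [log_div hy.ne' hx.ne', inv_div, one_sub_div hy.ne'] at h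

/-- Discrete analogue of `∫ dS / S = log S`. -/
lemma sum_div_le_log_sub_log (a S : ℕ → ℝ) (hS : ∀ j, 0 < S j)
    (hstep : ∀ j, S (j + 1) = S j + a (j + 1)) (n : ℕ) :
    ∑ j ∈ Icc 1 n, a j / S j ≤ log (S n) - log (S 0) := by
  induction n with
  | zero => simp
  | succ m ih =>
    rw [sum_Icc_succ_top (Nat.le_add_left 1 m)]
    have hinc : a (m + 1) / S (m + 1) ≤ log (S (m + 1)) - log (S m) := by
      simpa [hstep m] using sub_div_le_log_sub_log (hS m) (hS (m + 1))
    linarith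

theorem stmt_9_general (a : ℕ → ℝ) (ha : ∀ j, 0 ≤ a j) (ξ : ℝ) (hξ : 0 < ξ)
    (k : ℕ) :
    ∑ j ∈ Finset.Icc 1 k, a j / (ξ + ∑ i ∈ Finset.Icc 1 j, a i)
      ≤ Real.log (1 + (1 / ξ) * ∑ j ∈ Finset.Icc 1 k, a j) := by
  set S : ℕ → ℝ := fun j => ξ + ∑ i ∈ Icc 1 j, a i with hS
  have hS_pos : ∀ j, 0 < S j := fun j =>
    add_pos_of_pos_of_nonneg hξ (sum_nonneg fun i _ => ha i)
  have hstep : ∀ j, S (j + 1) = S j + a (j + 1) := fun j => by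
    simp only [hS, sum_Icc_succ_top (Nat.le_add_left 1 j), add_assoc]
  have hlog : log (1 + (1 / ξ) * ∑ j ∈ Icc 1 k, a j) = log (S k) - log (S 0) := by
    have hS0 : S 0 = ξ := by simp [hS]
    rw [hS0, ← log_div (hS_pos k).ne' hξ.ne']
    congr 1
    field_simp
    rfl
  rw [hlog]
  exact sum_div_le_log_sub_log a S hS_pos hstep k

theorem stmt_9 (a : ℕ → ℝ) (ha : ∀ j, 0 ≤ a j) (ξ : ℝ) (hξ : 0 < ξ)
    (k : ℕ) (hk : 1 ≤ k) :
    ∑ j ∈ Finset.Icc 1 k, a j / (ξ + ∑ i ∈ Finset.Icc 1 j, a i)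
      ≤ Real.log (1 + (1 / ξ) * ∑ j ∈ Finset.Icc 1 k, a j) :=
  stmt_9_general a ha ξ hξ k
end

section
/- Let p ∈ (0,1], κ > 0, σ > 0, m ∈ ℕ, and suppose φ̃_μ : ℝ → ℝ satisfies φ̃_μ(t) ≥ σμ and |φ̃_{μ₁}(t) − φ̃_{μ₂}(t)| ≤ κ|μ₁ − μ₂| for all t ∈ ℝ and all μ, μ₁, μ₂ > 0. Then for any t ∈ ℝ and any 0 < μ₂ ≤ μ₁ ≤ 1, |(φ̃_{μ₁}(t))^p − (φ̃_{μ₂}(t))^p| ≤ κ σ^{p−1} (μ₁/μ₂)^{1−p} (μ₁^p − μ₂^p). -/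
/-!
On `[σ μ₂, ∞)` the concave function `x ↦ x ^ p` has slope at most `p (σ μ₂) ^ (p - 1)`, and both
`φ μ₁ t` and `φ μ₂ t` lie there, so the Lipschitz bound in `μ` gives
`|φ μ₁ t ^ p - φ μ₂ t ^ p| ≤ p (σ μ₂) ^ (p - 1) κ (μ₁ - μ₂)`. Concavity again, now as the tangent
line of `x ↦ x ^ p` at `μ₁`, gives `p (μ₁ - μ₂) ≤ μ₁ ^ (1 - p) (μ₁ ^ p - μ₂ ^ p)`.
-/

open Real

namespace Real

variable {p : ℝ}

lemma rpow_le_rpow_add_mul_rpow_sub_one_mul_sub {u v : ℝ} (hu : 0 < u) (hv : 0 ≤ v)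
    (hp0 : 0 ≤ p) (hp1 : p ≤ 1) : v ^ p ≤ u ^ p + p * u ^ (p - 1) * (v - u) := by
  have bernoulli : (1 + (v / u - 1)) ^ p ≤ 1 + p * (v / u - 1) :=
    rpow_one_add_le_one_add_mul_self (by linarith [div_nonneg hv hu.le]) hp0 hp1
  rw [add_sub_cancel, div_rpow hv hu.le, div_le_iff₀ (rpow_pos_of_pos hu p)] at bernoulli
  have hu_pow : u ^ (p - 1) = u ^ p / u := by rw [rpow_sub hu, rpow_one]
  calc v ^ p ≤ (1 + p * (v / u - 1)) * u ^ p := bernoulli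
    _ = u ^ p + p * u ^ (p - 1) * (v - u) := by rw [hu_pow]; field_simp

lemma abs_rpow_sub_rpow_le {a b c : ℝ} (hc : 0 < c) (ha : c ≤ a) (hb : c ≤ b)
    (hp0 : 0 ≤ p) (hp1 : p ≤ 1) : |a ^ p - b ^ p| ≤ p * c ^ (p - 1) * |a - b| := by
  wlog hba : b ≤ a generalizing a b
  · rw [abs_sub_comm, abs_sub_comm a]
    exact this hb ha (le_of_not_ge hba)
  have hb0 : 0 < b := hc.trans_le hb
  rw [abs_of_nonneg (sub_nonneg.mpr (rpow_le_rpow hb0.le hba hp0)),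
    abs_of_nonneg (sub_nonneg.mpr hba)]
  calc a ^ p - b ^ p ≤ p * b ^ (p - 1) * (a - b) := by
        linarith [rpow_le_rpow_add_mul_rpow_sub_one_mul_sub hb0 (hb0.le.trans hba) hp0 hp1]
    _ ≤ p * c ^ (p - 1) * (a - b) := by
        have hpow : b ^ (p - 1) ≤ c ^ (p - 1) := rpow_le_rpow_of_nonpos hc hb (by linarith)
        gcongr

lemma mul_sub_le_rpow_one_sub_mul_rpow_sub_rpow {x y : ℝ} (hx : 0 < x) (hy : 0 ≤ y)
    (hp0 : 0 ≤ p) (hp1 : p ≤ 1) :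
    p * (x - y) ≤ x ^ (1 - p) * (x ^ p - y ^ p) := by
  have tangent := rpow_le_rpow_add_mul_rpow_sub_one_mul_sub hx hy hp0 hp1
  have hx_pow : x ^ (1 - p) * x ^ (p - 1) = 1 := by
    rw [← rpow_add hx]; norm_num
  calc p * (x - y) = x ^ (1 - p) * (p * x ^ (p - 1) * (x - y)) := by
        linear_combination (-(p * (x - y))) * hx_pow
    _ ≤ x ^ (1 - p) * (x ^ p - y ^ p) := by
        gcongr
        linarith

end Real

theorem stmt_14_general (p κ σ : ℝ) (hp0 : 0 < p) (hp1 : p ≤ 1) (hκ : 0 < κ) (hσ : 0 < σ)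
    (φ : ℝ → ℝ → ℝ)
    (hlb : ∀ μ : ℝ, 0 < μ → ∀ t : ℝ, φ μ t ≥ σ * μ)
    (hlip : ∀ μ₁ μ₂ : ℝ, 0 < μ₁ → 0 < μ₂ → ∀ t : ℝ,
        |φ μ₁ t - φ μ₂ t| ≤ κ * |μ₁ - μ₂|)
    (t μ₁ μ₂ : ℝ) (h2 : 0 < μ₂) (h21 : μ₂ ≤ μ₁) :
    |(φ μ₁ t) ^ p - (φ μ₂ t) ^ p|
      ≤ κ * σ ^ (p - 1) * (μ₁ / μ₂) ^ (1 - p) * (μ₁ ^ p - μ₂ ^ p) := by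
  have hμ₁ : 0 < μ₁ := h2.trans_le h21
  have hφ₁ : σ * μ₂ ≤ φ μ₁ t := (mul_le_mul_of_nonneg_left h21 hσ.le).trans (hlb μ₁ hμ₁ t)
  have hdiff : |φ μ₁ t - φ μ₂ t| ≤ κ * (μ₁ - μ₂) := by
    simpa only [abs_of_nonneg (sub_nonneg.mpr h21)] using hlip μ₁ μ₂ hμ₁ h2 t
  calc |φ μ₁ t ^ p - φ μ₂ t ^ p| ≤ p * (σ * μ₂) ^ (p - 1) * |φ μ₁ t - φ μ₂ t| :=
        abs_rpow_sub_rpow_le (by positivity) hφ₁ (hlb μ₂ h2 t) hp0.le hp1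
    _ ≤ p * (σ * μ₂) ^ (p - 1) * (κ * (μ₁ - μ₂)) := by gcongr
    _ = κ * σ ^ (p - 1) * μ₂ ^ (p - 1) * (p * (μ₁ - μ₂)) := by
        rw [mul_rpow hσ.le h2.le]; ring
    _ ≤ κ * σ ^ (p - 1) * μ₂ ^ (p - 1) * (μ₁ ^ (1 - p) * (μ₁ ^ p - μ₂ ^ p)) := by
        gcongr _ * ?_
        exact mul_sub_le_rpow_one_sub_mul_rpow_sub_rpow hμ₁ h2.le hp0.le hp1
    _ = κ * σ ^ (p - 1) * (μ₁ / μ₂) ^ (1 - p) * (μ₁ ^ p - μ₂ ^ p) := by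
        rw [div_rpow hμ₁.le h2.le, ← neg_sub 1 p, rpow_neg h2.le]; ring

theorem stmt_14 (p κ σ : ℝ) (hp0 : 0 < p) (hp1 : p ≤ 1) (hκ : 0 < κ) (hσ : 0 < σ)
    (φ : ℝ → ℝ → ℝ)
    (hlb : ∀ μ : ℝ, 0 < μ → ∀ t : ℝ, φ μ t ≥ σ * μ)
    (hlip : ∀ μ₁ μ₂ : ℝ, 0 < μ₁ → 0 < μ₂ → ∀ t : ℝ,
        |φ μ₁ t - φ μ₂ t| ≤ κ * |μ₁ - μ₂|)
    (t μ₁ μ₂ : ℝ) (h2 : 0 < μ₂) (h21 : μ₂ ≤ μ₁) (h1 : μ₁ ≤ 1) :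
    |(φ μ₁ t) ^ p - (φ μ₂ t) ^ p|
      ≤ κ * σ ^ (p - 1) * (μ₁ / μ₂) ^ (1 - p) * (μ₁ ^ p - μ₂ ^ p) :=
  stmt_14_general p κ σ hp0 hp1 hκ hσ φ hlb hlip t μ₁ μ₂ h2 h21
end
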